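/- For 0 < ε < r, s ∈ ℝ, and η a continuous nondecreasing function, with a := min(τ_y, s - r) ∨ 0, b := min(τ_y, s - ε) ∨ 0, c := min(τ_y, s + ε), d := min(τ_y, s + r), where s := τ_y + ζ for ζ ≥ 0: one has a = min(τ_y, τ_y + ζ - r) ∨ 0, b = min(τ_y, τ_y + ζ - ε) ∨ 0, c = τ_y, and d = τ_y. Consequently, η(c,d) = 0 and η(min(s,τ_y), c) = 0, so the Stieltjes integral decomposition ∫₀^{τ_y} (∂R/∂s)(t, s) dη(t) reduces to -∫_a^b (1/(s - t) - 1/r) dη(t) - (1/ε - 1/r)·η(b, τ_y). -/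

import Mathlib

/-!
Since `s ≥ τ_y`, for `t ∈ (0, τ_y]` the lag `s - t` is nonnegative, so `∂R/∂s(t, s)` is `0` for
`t ≤ s - r`, `-(1/(s-t) - 1/r)` for `s - r < t ≤ s - ε`, and the constant `-(1/ε - 1/r)` for
`s - ε < t < s`; `a` and `b` are the two thresholds clamped to `[0, τ_y]`. The integrand is bounded,
so the integral splits along `(0, a] ∪ (a, b] ∪ (b, τ_y]`, and the possible exceptional point
`t = s` of the last piece is `dη`-null because `η` is continuous.
-/

open MeasureTheory

/-- The a.e. partial derivative `∂R/∂s(t,s)` (in its second variable) of the truncated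
covariance `R`, evaluated as a function of `(t,s)`. -/
noncomputable def dRcov (ε r t s : ℝ) : ℝ :=
  if |s - t| ≤ ε then -(1/ε - 1/r) * Real.sign (s - t)
  else if |s - t| < r then -(1/|s - t| - 1/r) * Real.sign (s - t)
  else 0

open Set

section Clamp

variable {α : Type*} [LinearOrder α] {l u x t : α}

theorem le_of_le_max_min_of_lt (hlt : l < t) (h : t ≤ max (min u x) l) : t ≤ x :=
  (le_max_iff.1 h).resolve_right hlt.not_ge |>.trans (min_le_right _ _)

theorem lt_of_max_min_lt_of_le (h : max (min u x) l < t) (htu : t ≤ u) : x < t :=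
  (min_lt_iff.1 (max_lt_iff.1 h).1).resolve_left htu.not_gt

theorem max_min_le_max_min {y : α} (hxy : x ≤ y) : max (min u x) l ≤ max (min u y) l := by
  gcongr

end Clamp

namespace Real

theorem abs_sign_le_one (x : ℝ) : |sign x| ≤ 1 := by
  rcases sign_apply_eq x with h | h | h <;> simp [h]

theorem measurable_sign : Measurable sign :=
  Measurable.ite measurableSet_Iio measurable_const
    (Measurable.ite measurableSet_Ioi measurable_const measurable_const)

end Real

section dRcov

variable {ε r t s : ℝ}

theorem dRcov_eq_zero_of_le_sub (hεr : ε < r) (h : r ≤ s - t) : dRcov ε r t s = 0 := by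
  have hst : r ≤ |s - t| := h.trans (le_abs_self _)
  rw [dRcov, if_neg (by linarith), if_neg hst.not_gt]

theorem dRcov_eq_of_le_sub_of_sub_lt (hε : 0 < ε) (h₁ : ε ≤ s - t) (h₂ : s - t < r) :
    dRcov ε r t s = -(1/(s - t) - 1/r) := by
  have hpos : 0 < s - t := hε.trans_le h₁
  rw [dRcov, abs_of_pos hpos, Real.sign_of_pos hpos, mul_one, mul_one, if_pos h₂]
  split_ifs with h
  · -- at `s - t = ε` the first branch applies, with the same value
    rw [le_antisymm h h₁]
  · rfl

theorem dRcov_eq_of_pos_of_le (h₁ : 0 < s - t) (h₂ : s - t ≤ ε) :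
    dRcov ε r t s = -(1/ε - 1/r) := by
  rw [dRcov, abs_of_pos h₁, Real.sign_of_pos h₁, mul_one, if_pos h₂]

theorem abs_dRcov_le (hε : 0 < ε) (hεr : ε < r) : |dRcov ε r t s| ≤ 1/ε - 1/r := by
  have hsign := Real.abs_sign_le_one (s - t)
  have hr : 1/r ≤ 1/ε := one_div_le_one_div_of_le hε hεr.le
  unfold dRcov
  split_ifs with h₁ h₂
  · rw [abs_mul, abs_neg, abs_of_nonneg (sub_nonneg.2 hr)]
    exact mul_le_of_le_one_right (sub_nonneg.2 hr) hsign
  · have hpos : 0 < |s - t| := hε.trans (not_le.1 h₁)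
    have hlow : 1/r ≤ 1/|s - t| := one_div_le_one_div_of_le hpos h₂.le
    have hup : 1/|s - t| ≤ 1/ε := one_div_le_one_div_of_le hε (not_le.1 h₁).le
    rw [abs_mul, abs_neg, abs_of_nonneg (sub_nonneg.2 hlow)]
    exact (mul_le_of_le_one_right (sub_nonneg.2 hlow) hsign).trans (by linarith)
  · simpa using hr

theorem measurable_dRcov : Measurable fun t => dRcov ε r t s := by
  have hd : Measurable fun t : ℝ => |s - t| := (measurable_const.sub measurable_id).abs
  have hsign : Measurable fun t : ℝ => Real.sign (s - t) :=
    Real.measurable_sign.comp (measurable_const.sub measurable_id)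
  refine Measurable.ite (measurableSet_le hd measurable_const) (measurable_const.mul hsign)
    (Measurable.ite (measurableSet_lt hd measurable_const) ?_ measurable_const)
  exact ((measurable_const.div hd).sub measurable_const).neg.mul hsign

theorem integrableOn_dRcov {μ : Measure ℝ} {A : Set ℝ} (hA : μ A ≠ ⊤) (hε : 0 < ε)
    (hεr : ε < r) : IntegrableOn (fun t => dRcov ε r t s) A μ :=
  Measure.integrableOn_of_bounded hA measurable_dRcov.aestronglyMeasurable
    (ae_of_all _ fun _ => abs_dRcov_le hε hεr)

end dRcov

namespace StieltjesFunction

theorem measure_singleton_of_continuousAt (f : StieltjesFunction ℝ) {x : ℝ}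
    (hf : ContinuousAt f x) : f.measure {x} = 0 := by
  rw [f.measure_singleton, hf.continuousWithinAt.leftLim_eq, sub_self, ENNReal.ofReal_zero]

theorem measureReal_Ioc (f : StieltjesFunction ℝ) {a b : ℝ} (hab : a ≤ b) :
    f.measure.real (Ioc a b) = f b - f a := by
  rw [measureReal_def, f.measure_Ioc, ENNReal.toReal_ofReal (sub_nonneg.2 (f.mono hab))]

end StieltjesFunction

theorem setIntegral_Ioc_dRcov {ε r s τ a b : ℝ} {μ : Measure ℝ} [IsLocallyFiniteMeasure μ]
    (hε : 0 < ε) (hεr : ε < r) (hτ : 0 ≤ τ) (hτs : τ ≤ s) (hs : μ {s} = 0)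
    (ha : a = max (min τ (s - r)) 0) (hb : b = max (min τ (s - ε)) 0) :
    ∫ t in Ioc 0 τ, dRcov ε r t s ∂μ =
      -(∫ t in Ioc a b, (1/(s - t) - 1/r) ∂μ) - (1/ε - 1/r) * μ.real (Ioc b τ) := by
  have ha0 : 0 ≤ a := ha ▸ le_max_right _ _
  have hab : a ≤ b := ha ▸ hb ▸ max_min_le_max_min (by linarith)
  have hbτ : b ≤ τ := hb ▸ max_le (min_le_left _ _) hτ
  have hintegrable : ∀ A ⊆ Ioc 0 τ, IntegrableOn (fun t => dRcov ε r t s) A μ := fun A hA =>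
    integrableOn_dRcov ((measure_mono hA).trans_lt measure_Ioc_lt_top).ne hε hεr
  have hlow : ∫ t in Ioc 0 a, dRcov ε r t s ∂μ = 0 := by
    refine setIntegral_eq_zero_of_forall_eq_zero fun t ⟨ht0, hta⟩ =>
      dRcov_eq_zero_of_le_sub hεr ?_
    linarith [le_of_le_max_min_of_lt ht0 (ha ▸ hta)]
  have hmid : ∫ t in Ioc a b, dRcov ε r t s ∂μ = -∫ t in Ioc a b, (1/(s - t) - 1/r) ∂μ := by
    rw [← integral_neg]
    refine setIntegral_congr_fun measurableSet_Ioc fun t ⟨hat, htb⟩ =>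
      dRcov_eq_of_le_sub_of_sub_lt hε ?_ ?_
    · linarith [le_of_le_max_min_of_lt (ha0.trans_lt hat) (hb ▸ htb)]
    · linarith [lt_of_max_min_lt_of_le (ha ▸ hat) (htb.trans hbτ)]
  have hhigh : ∫ t in Ioc b τ, dRcov ε r t s ∂μ = -(1/ε - 1/r) * μ.real (Ioc b τ) := by
    have hae : ∀ᵐ t ∂μ.restrict (Ioc b τ), dRcov ε r t s = -(1/ε - 1/r) := by
      filter_upwards [ae_restrict_mem measurableSet_Ioc,
        ae_restrict_of_ae (compl_mem_ae_iff.2 hs)] with t ⟨hbt, htτ⟩ hts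
      refine dRcov_eq_of_pos_of_le (sub_pos.2 ((htτ.trans hτs).lt_of_ne hts)) ?_
      linarith [lt_of_max_min_lt_of_le (hb ▸ hbt) htτ]
    rw [integral_congr_ae hae, setIntegral_const, smul_eq_mul, mul_comm]
  rw [← Ioc_union_Ioc_eq_Ioc ha0 (hab.trans hbτ),
    setIntegral_union (Ioc_disjoint_Ioc_of_le le_rfl) measurableSet_Ioc
      (hintegrable _ (Ioc_subset_Ioc_right (hab.trans hbτ)))
      (hintegrable _ (Ioc_subset_Ioc_left ha0)),
    ← Ioc_union_Ioc_eq_Ioc hab hbτ,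
    setIntegral_union (Ioc_disjoint_Ioc_of_le le_rfl) measurableSet_Ioc
      (hintegrable _ (Ioc_subset_Ioc ha0 hbτ))
      (hintegrable _ (Ioc_subset_Ioc_left (ha0.trans hab))),
    hlow, hmid, hhigh]
  ring

theorem stmt15_general (ε r ζ τy : ℝ) (hε : 0 < ε) (hεr : ε < r) (hζ : 0 ≤ ζ) (hτy : 0 ≤ τy)
    (η : StieltjesFunction ℝ) (hηc : Continuous η)
    (s a b c d : ℝ) (hs : s = τy + ζ)
    (ha : a = max (min τy (s - r)) 0) (hb : b = max (min τy (s - ε)) 0)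
    (hc : c = min τy (s + ε)) (hd : d = min τy (s + r)) :
    c = τy ∧ d = τy ∧ η d - η c = 0 ∧ η c - η (min s τy) = 0 ∧
    (∫ t in Set.Ioc (0:ℝ) τy, dRcov ε r t s ∂η.measure) =
      -(∫ t in Set.Ioc a b, (1/(s - t) - 1/r) ∂η.measure) - (1/ε - 1/r) * (η τy - η b) := by
  have hτs : τy ≤ s := by linarith
  have hc' : c = τy := hc ▸ min_eq_left (by linarith)
  have hd' : d = τy := hd ▸ min_eq_left (by linarith)
  have hbτ : b ≤ τy := hb ▸ max_le (min_le_left _ _) hτy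
  refine ⟨hc', hd', by rw [hc', hd', sub_self], by rw [hc', min_eq_right hτs, sub_self], ?_⟩
  rw [setIntegral_Ioc_dRcov hε hεr hτy hτs (η.measure_singleton_of_continuousAt hηc.continuousAt)
    ha hb, η.measureReal_Ioc hbτ]

/-- For `s = τ_y + ζ ≥ τ_y` the endpoints collapse: `c = d = τ_y`, the corresponding
increments of `η` vanish, and the Stieltjes integral of `∂R/∂s` reduces to
`-∫_a^b (1/(s-t) - 1/r) dη(t) - (1/ε - 1/r)·η(b, τ_y)`. -/
theorem stmt15 (ε r ζ τy : ℝ) (hε : 0 < ε) (hεr : ε < r) (hζ : 0 ≤ ζ) (hτy : 0 ≤ τy)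
    (η : StieltjesFunction ℝ) (hηc : Continuous η) (hηm : Monotone (η : ℝ → ℝ))
    (s a b c d : ℝ) (hs : s = τy + ζ)
    (ha : a = max (min τy (s - r)) 0) (hb : b = max (min τy (s - ε)) 0)
    (hc : c = min τy (s + ε)) (hd : d = min τy (s + r)) :
    c = τy ∧ d = τy ∧ η d - η c = 0 ∧ η c - η (min s τy) = 0 ∧
    (∫ t in Set.Ioc (0:ℝ) τy, dRcov ε r t s ∂η.measure) =
      -(∫ t in Set.Ioc a b, (1/(s - t) - 1/r) ∂η.measure) - (1/ε - 1/r) * (η τy - η b) :=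
  stmt15_general ε r ζ τy hε hεr hζ hτy η hηc s a b c d hs ha hb hc hd
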